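/- arXiv:2310.15519 — 3 statements merged into one kernel-verified Lean document; each statement's English description precedes it below -/
import Mathlib

section
/- Let P_{v,v'} be the equal mixture of Gaussians with means ±√(v'/(v'+v)) and variance v/(v+v'), and G_1 the standard Gaussian. Then 1 + χ²(P_{v,v'}, G_1) = (v+v')·(e^{v'/(v+2v')} + e^{-v'/v}) / (2√(v(v+2v'))). -/
open MeasureTheory Real

/-- The density of the equal mixture of two Gaussians with variance
`v/(v+v')` and means `±√(v'/(v'+v))`. -/
noncomputable def mixtureDensity (v v' : ℝ) (x : ℝ) : ℝ :=
  (1 / 2) * Real.sqrt ((v' + v) / (2 * π * v)) *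
    (Real.exp (-((v' + v) * (x - Real.sqrt (v' / (v' + v))) ^ 2) / (2 * v))
      + Real.exp (-((v' + v) * (x + Real.sqrt (v' / (v' + v))) ^ 2) / (2 * v)))

/-- The standard Gaussian density. -/
noncomputable def stdGaussianDensity (x : ℝ) : ℝ :=
  (2 * π) ^ (-(1 : ℝ) / 2) * Real.exp (-x ^ 2 / 2)

lemma gauss_integrable (b μ : ℝ) (hb : 0 < b) :
    Integrable (fun x : ℝ => Real.exp (-b * (x - μ) ^ 2)) := by
  have := ((measurePreserving_sub_right volume μ).integrable_comp
    (integrable_exp_neg_mul_sq hb).aestronglyMeasurable).2 ?_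
  · exact this
  · simpa using (integrable_exp_neg_mul_sq hb)

lemma gauss_integral (b μ : ℝ) :
    ∫ x : ℝ, Real.exp (-b * (x - μ) ^ 2) = Real.sqrt (π / b) := by
  rw [integral_sub_right_eq_self (μ := volume) (fun x => Real.exp (-b * x ^ 2)) μ]
  exact integral_gaussian b

/-- Explicit formula for `1 + χ²(P_{v,v'}, G₁)` where `P_{v,v'}` is the
symmetric two-Gaussian mixture and `G₁` the standard Gaussian:
`1 + χ² = (v+v')(e^{v'/(v+2v')} + e^{-v'/v})/(2√(v(v+2v')))`. -/
theorem chiSq_mixture_formula (v v' : ℝ) (hv : 0 < v) (hv' : 0 < v') :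
    1 + ∫ x : ℝ, (mixtureDensity v v' x - stdGaussianDensity x) ^ 2
          / stdGaussianDensity x
      = (v + v') * (Real.exp (v' / (v + 2 * v')) + Real.exp (-v' / v))
          / (2 * Real.sqrt (v * (v + 2 * v'))) := by
  have hπ := Real.pi_pos
  have hA : (0:ℝ) < v' + v := by linarith
  have hB : (0:ℝ) < v + 2*v' := by linarith
  set m := Real.sqrt (v' / (v' + v)) with hm_def
  set c := Real.sqrt ((v' + v) / (2 * π * v)) with hc_def
  have hm2 : m^2 = v'/(v'+v) := Real.sq_sqrt (by positivity)
  have hc2 : c^2 = (v'+v)/(2*π*v) := Real.sq_sqrt (by positivity)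
  have hα : (0:ℝ) < (v+2*v')/(2*v) := by positivity
  have hb : (0:ℝ) < (v'+v)/(2*v) := by positivity
  set α := (v+2*v')/(2*v) with hα_def
  set μ₁ := 2*(v'+v)*m/(v+2*v') with hμ_def
  set D := (1/4 : ℝ) * ((v'+v)/(2*π*v)) with hD_def
  set C₁ := D * Real.sqrt (2*π) * Real.exp (v'/(v+2*v')) with hC1_def
  set C₂ := 2 * (D * Real.sqrt (2*π)) * Real.exp (-v'/v) with hC2_def
  have hQpos : ∀ x : ℝ, 0 < stdGaussianDensity x := by
    intro x; unfold stdGaussianDensity; positivity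
  have hrpow : ((2:ℝ) * π) ^ (-(1 : ℝ) / 2) = (Real.sqrt (2*π))⁻¹ := by
    rw [show (-(1:ℝ)/2) = -(1/2 : ℝ) by norm_num, Real.rpow_neg (by positivity),
      ← Real.sqrt_eq_rpow]
  -- the pointwise identity p²/q = three gaussians
  have hF : ∀ x : ℝ, mixtureDensity v v' x ^ 2 / stdGaussianDensity x
      = C₁ * Real.exp (-α*(x-μ₁)^2) + C₁ * Real.exp (-α*(x- -μ₁)^2)
        + C₂ * Real.exp (-α*(x-0)^2) := by
    intro x
    rw [div_eq_iff (hQpos x).ne']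
    unfold mixtureDensity stdGaussianDensity
    rw [← hm_def, ← hc_def, hrpow]
    have I1 : v'/(v+2*v') + -α*(x-μ₁)^2 + -x^2/2
        = -((v'+v)*(x-m)^2)/(2*v) + -((v'+v)*(x-m)^2)/(2*v) := by
      have e1 : (x-m)^2 = x^2 - 2*x*m + v'/(v'+v) := by rw [sub_sq, hm2]
      have e2 : (x-μ₁)^2 = x^2 - 2*x*μ₁ + (2*(v'+v)/(v+2*v'))^2*(v'/(v'+v)) := by
        rw [sub_sq, show μ₁^2 = (2*(v'+v)/(v+2*v'))^2 * m^2 from by rw [hμ_def]; ring, hm2]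
      rw [e1, e2, hμ_def, hα_def]
      field_simp
      ring
    have I2 : v'/(v+2*v') + -α*(x- -μ₁)^2 + -x^2/2
        = -((v'+v)*(x+m)^2)/(2*v) + -((v'+v)*(x+m)^2)/(2*v) := by
      have e1 : (x+m)^2 = x^2 + 2*x*m + v'/(v'+v) := by rw [add_sq, hm2]
      have e2 : (x- -μ₁)^2 = x^2 + 2*x*μ₁ + (2*(v'+v)/(v+2*v'))^2*(v'/(v'+v)) := by
        rw [sub_neg_eq_add, add_sq,
          show μ₁^2 = (2*(v'+v)/(v+2*v'))^2 * m^2 from by rw [hμ_def]; ring, hm2]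
      rw [e1, e2, hμ_def, hα_def]
      field_simp
      ring
    have I3 : -v'/v + -α*(x-0)^2 + -x^2/2
        = -((v'+v)*(x-m)^2)/(2*v) + -((v'+v)*(x+m)^2)/(2*v) := by
      have e1 : (x-m)^2 = x^2 - 2*x*m + v'/(v'+v) := by rw [sub_sq, hm2]
      have e2 : (x+m)^2 = x^2 + 2*x*m + v'/(v'+v) := by rw [add_sq, hm2]
      rw [e1, e2, hα_def]
      field_simp
      ring
    have hs : Real.sqrt (2*π) ≠ 0 := by positivity
    calc (1/2 * c * (Real.exp (-((v'+v)*(x-m)^2)/(2*v))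
            + Real.exp (-((v'+v)*(x+m)^2)/(2*v))))^2
        = c^2 * (1/4) * (Real.exp (-((v'+v)*(x-m)^2)/(2*v)) * Real.exp (-((v'+v)*(x-m)^2)/(2*v))
            + Real.exp (-((v'+v)*(x+m)^2)/(2*v)) * Real.exp (-((v'+v)*(x+m)^2)/(2*v))
            + 2 * (Real.exp (-((v'+v)*(x-m)^2)/(2*v)) * Real.exp (-((v'+v)*(x+m)^2)/(2*v)))) := by
          ring
      _ = D * (Real.exp (-((v'+v)*(x-m)^2)/(2*v) + -((v'+v)*(x-m)^2)/(2*v))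
            + Real.exp (-((v'+v)*(x+m)^2)/(2*v) + -((v'+v)*(x+m)^2)/(2*v))
            + 2 * Real.exp (-((v'+v)*(x-m)^2)/(2*v) + -((v'+v)*(x+m)^2)/(2*v))) := by
          rw [hc2, hD_def]
          simp only [← Real.exp_add]
          ring
      _ = D * (Real.exp (v'/(v+2*v') + -α*(x-μ₁)^2 + -x^2/2)
            + Real.exp (v'/(v+2*v') + -α*(x- -μ₁)^2 + -x^2/2)
            + 2 * Real.exp (-v'/v + -α*(x-0)^2 + -x^2/2)) := by
          rw [I1, I2, I3]
      _ = (C₁ * Real.exp (-α*(x-μ₁)^2) + C₁ * Real.exp (-α*(x- -μ₁)^2)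
            + C₂ * Real.exp (-α*(x-0)^2)) * ((Real.sqrt (2*π))⁻¹ * Real.exp (-x^2/2)) := by
          rw [hC1_def, hC2_def]
          simp only [Real.exp_add]
          field_simp
  -- rewrite P and Q as sums of standard gaussian shapes
  have hPfun : mixtureDensity v v' = fun x =>
      (1/2*c) * Real.exp (-((v'+v)/(2*v))*(x-m)^2)
        + (1/2*c) * Real.exp (-((v'+v)/(2*v))*(x- -m)^2) := by
    funext x
    unfold mixtureDensity
    rw [← hm_def, ← hc_def,
      show -((v'+v)*(x-m)^2)/(2*v) = -((v'+v)/(2*v))*(x-m)^2 from by ring,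
      show -((v'+v)*(x+m)^2)/(2*v) = -((v'+v)/(2*v))*(x- -m)^2 from by ring]
    ring
  have hQfun : stdGaussianDensity = fun x =>
      (Real.sqrt (2*π))⁻¹ * Real.exp (-(1/2 : ℝ)*(x-0)^2) := by
    funext x
    unfold stdGaussianDensity
    rw [hrpow, show -x^2/2 = -(1/2:ℝ)*(x-0)^2 from by ring]
  have intP : Integrable (mixtureDensity v v') := by
    rw [hPfun]
    exact ((gauss_integrable _ _ hb).const_mul _).add ((gauss_integrable _ _ hb).const_mul _)
  have intQ : Integrable stdGaussianDensity := by
    rw [hQfun]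
    exact (gauss_integrable _ _ (by norm_num)).const_mul _
  have int1 : Integrable (fun x : ℝ => C₁ * Real.exp (-α*(x-μ₁)^2)) :=
    (gauss_integrable _ _ hα).const_mul _
  have int2 : Integrable (fun x : ℝ => C₁ * Real.exp (-α*(x- -μ₁)^2)) :=
    (gauss_integrable _ _ hα).const_mul _
  have int3 : Integrable (fun x : ℝ => C₂ * Real.exp (-α*(x-0)^2)) :=
    (gauss_integrable _ _ hα).const_mul _
  have int12 : Integrable (fun x : ℝ => C₁ * Real.exp (-α*(x-μ₁)^2)
      + C₁ * Real.exp (-α*(x- -μ₁)^2)) := int1.add int2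
  have intF : Integrable (fun x : ℝ => C₁ * Real.exp (-α*(x-μ₁)^2)
      + C₁ * Real.exp (-α*(x- -μ₁)^2) + C₂ * Real.exp (-α*(x-0)^2)) := int12.add int3
  have intFP : Integrable (fun x : ℝ => C₁ * Real.exp (-α*(x-μ₁)^2)
      + C₁ * Real.exp (-α*(x- -μ₁)^2) + C₂ * Real.exp (-α*(x-0)^2)
      - 2 * mixtureDensity v v' x) := intF.sub (intP.const_mul 2)
  -- values of the integrals
  have hIQ : ∫ x : ℝ, stdGaussianDensity x = 1 := by
    simp only [hQfun]
    rw [integral_const_mul, gauss_integral,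
      show π/(1/2:ℝ) = 2*π from by ring]
    exact inv_mul_cancel₀ (by positivity)
  have hIP : ∫ x : ℝ, mixtureDensity v v' x = 1 := by
    simp only [hPfun]
    rw [integral_add ((gauss_integrable _ _ hb).const_mul _)
      ((gauss_integrable _ _ hb).const_mul _), integral_const_mul, integral_const_mul,
      gauss_integral, gauss_integral]
    have hcs : c * Real.sqrt (π/((v'+v)/(2*v))) = 1 := by
      rw [hc_def, ← Real.sqrt_mul (by positivity),
        show ((v'+v)/(2*π*v)) * (π/((v'+v)/(2*v))) = 1 from by field_simp, Real.sqrt_one]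
    linear_combination hcs
  have hIF : ∫ x : ℝ, (C₁ * Real.exp (-α*(x-μ₁)^2) + C₁ * Real.exp (-α*(x- -μ₁)^2)
      + C₂ * Real.exp (-α*(x-0)^2)) = (2*C₁ + C₂) * Real.sqrt (π/α) := by
    rw [integral_add int12 int3, integral_add int1 int2,
      integral_const_mul, integral_const_mul, integral_const_mul,
      gauss_integral, gauss_integral, gauss_integral]
    ring
  -- value of the sum
  have Sval : (2*C₁ + C₂) * Real.sqrt (π/α)
      = (v + v') * (Real.exp (v' / (v + 2 * v')) + Real.exp (-v' / v))
          / (2 * Real.sqrt (v * (v + 2 * v'))) := by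
    have htu : Real.sqrt (v/(v+2*v')) * Real.sqrt (v*(v+2*v')) = v := by
      rw [← Real.sqrt_mul (by positivity),
        show (v/(v+2*v'))*(v*(v+2*v')) = v^2 from by field_simp, Real.sqrt_sq hv.le]
    have hkey : 2 * D * (Real.sqrt (2*π) * Real.sqrt (π/α))
        = (v+v')/(2*Real.sqrt (v*(v+2*v'))) := by
      rw [← Real.sqrt_mul (by positivity),
        show 2*π*(π/α) = (2*π)^2 * (v/(v+2*v')) from by rw [hα_def]; field_simp,
        Real.sqrt_mul (sq_nonneg _), Real.sqrt_sq (by positivity)]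
      rw [eq_div_iff (by positivity : (2*Real.sqrt (v*(v+2*v'))) ≠ 0)]
      rw [show 2*D*(2*π*Real.sqrt (v/(v+2*v')))*(2*Real.sqrt (v*(v+2*v')))
          = 8*π*D*(Real.sqrt (v/(v+2*v')) * Real.sqrt (v*(v+2*v'))) from by ring, htu, hD_def]
      field_simp
      ring
    rw [hC1_def, hC2_def]
    calc (2*(D * Real.sqrt (2*π) * Real.exp (v'/(v+2*v')))
          + 2 * (D * Real.sqrt (2*π)) * Real.exp (-v'/v)) * Real.sqrt (π/α)
        = (2 * D * (Real.sqrt (2*π) * Real.sqrt (π/α)))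
            * (Real.exp (v'/(v+2*v')) + Real.exp (-v'/v)) := by ring
      _ = (v+v')/(2*Real.sqrt (v*(v+2*v'))) * (Real.exp (v'/(v+2*v')) + Real.exp (-v'/v)) := by
          rw [hkey]
      _ = (v + v') * (Real.exp (v' / (v + 2 * v')) + Real.exp (-v' / v))
          / (2 * Real.sqrt (v * (v + 2 * v'))) := by ring
  -- assemble
  have hptfun : (fun x : ℝ => (mixtureDensity v v' x - stdGaussianDensity x) ^ 2
        / stdGaussianDensity x)
      = fun x => (C₁ * Real.exp (-α*(x-μ₁)^2) + C₁ * Real.exp (-α*(x- -μ₁)^2)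
          + C₂ * Real.exp (-α*(x-0)^2) - 2 * mixtureDensity v v' x) + stdGaussianDensity x := by
    funext x
    rw [← hF x]
    field_simp [(hQpos x).ne']
    ring
  rw [hptfun, integral_add intFP intQ,
    integral_sub intF (intP.const_mul 2), integral_const_mul, hIF, hIP, hIQ]
  linear_combination Sval
end

section
/- The relative entropy D(P_{v,v'}‖G_1) between the symmetric two-component Gaussian mixture P_{v,v'} (means ±√(v'/(v'+v)), variance v/(v+v')) and the standard Gaussian G_1 satisfies D(P_{v,v'}‖G_1) ≤ (v+v')·(e^{v'/(v+2v')} + e^{-v'/v}) / (2√(v(v+2v'))) − 1. -/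
open MeasureTheory Real

lemma integrable_gauss_lin (a b : ℝ) (ha : 0 < a) :
    Integrable (fun x : ℝ => Real.exp (-a * x ^ 2 + b * x)) := by
  have h : ∀ x : ℝ, -a * x ^ 2 + b * x
      = -a * (x - b / (2 * a)) ^ 2 + b ^ 2 / (4 * a) := by
    intro x; field_simp; ring
  simp_rw [h, Real.exp_add]
  exact ((integrable_exp_neg_mul_sq ha).comp_sub_right (b / (2 * a))).mul_const _

lemma integral_gauss_lin (a b : ℝ) (ha : 0 < a) :
    ∫ x : ℝ, Real.exp (-a * x ^ 2 + b * x)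
      = Real.sqrt (π / a) * Real.exp (b ^ 2 / (4 * a)) := by
  have h : ∀ x : ℝ, -a * x ^ 2 + b * x
      = -a * (x - b / (2 * a)) ^ 2 + b ^ 2 / (4 * a) := by
    intro x; field_simp; ring
  simp_rw [h, Real.exp_add]
  rw [MeasureTheory.integral_mul_const,
    integral_sub_right_eq_self (μ := volume) (fun x => Real.exp (-a * x ^ 2)) (b / (2 * a)),
    integral_gaussian]

lemma integrable_sq_mul_gauss (a c d : ℝ) (ha : 0 < a) :
    Integrable (fun x : ℝ => (x - d) ^ 2 * Real.exp (-a * (x - c) ^ 2)) := by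
  have h2 : Integrable (fun x : ℝ => x ^ 2 * Real.exp (-a * x ^ 2)) := by
    have := integrable_rpow_mul_exp_neg_mul_sq ha (s := 2) (by norm_num)
    simpa [Real.rpow_natCast] using this
  have h1 : Integrable (fun x : ℝ => x * Real.exp (-a * x ^ 2)) :=
    integrable_mul_exp_neg_mul_sq ha
  have h0 : Integrable (fun x : ℝ => Real.exp (-a * x ^ 2)) := integrable_exp_neg_mul_sq ha
  have base : Integrable (fun x : ℝ => (x + (c - d)) ^ 2 * Real.exp (-a * x ^ 2)) := by
    have heq : (fun x : ℝ => (x + (c - d)) ^ 2 * Real.exp (-a * x ^ 2))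
        = fun x : ℝ => x ^ 2 * Real.exp (-a * x ^ 2)
            + ((2 * (c - d)) * (x * Real.exp (-a * x ^ 2))
            + (c - d) ^ 2 * Real.exp (-a * x ^ 2)) := by
      funext x; ring
    rw [heq]
    exact h2.add ((h1.const_mul _).add (h0.const_mul _))
  have := base.comp_sub_right c
  simpa [sub_add_sub_cancel] using this

set_option maxHeartbeats 1000000 in
/-- The relative entropy `D(P_{v,v'}‖G₁) = ∫ p log(p/q)` between the symmetric
two-Gaussian mixture and the standard Gaussian is bounded by
`(v+v')(e^{v'/(v+2v')} + e^{-v'/v})/(2√(v(v+2v'))) − 1`. -/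
theorem kl_mixture_le (v v' : ℝ) (hv : 0 < v) (hv' : 0 < v') :
    ∫ x : ℝ, mixtureDensity v v' x
        * Real.log (mixtureDensity v v' x / stdGaussianDensity x)
      ≤ (v + v') * (Real.exp (v' / (v + 2 * v')) + Real.exp (-v' / v))
          / (2 * Real.sqrt (v * (v + 2 * v'))) - 1 := by
  have hπ : 0 < π := Real.pi_pos
  set s : ℝ := v' + v with hsdef
  have hs : 0 < s := by positivity
  set m : ℝ := Real.sqrt (v' / s) with hmdef
  have hm2 : m ^ 2 = v' / s := Real.sq_sqrt (by positivity)
  have hsm : (v' + v) * m ^ 2 = v' := by rw [hm2, hsdef]; field_simp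
  set k : ℝ := s / (2 * v) with hkdef
  have hk : 0 < k := by positivity
  set c : ℝ := (1 / 2) * Real.sqrt (s / (2 * π * v)) with hcdef
  have hc : 0 < c := by positivity
  set a : ℝ := (v + 2 * v') / (2 * v) with hadef
  have ha : 0 < a := by positivity
  set b : ℝ := 2 * s * m / v with hbdef
  -- rewriting the densities
  have hp_eq : ∀ x : ℝ, mixtureDensity v v' x
      = c * (Real.exp (-k * (x - m) ^ 2) + Real.exp (-k * (x + m) ^ 2)) := by
    intro x
    unfold mixtureDensity
    rw [← hsdef, ← hmdef, ← hcdef]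
    have hexp : ∀ y : ℝ, -(s * y ^ 2) / (2 * v) = -k * y ^ 2 := by
      intro y; rw [hkdef]; field_simp
    rw [hexp, hexp]
  have hq_eq : ∀ x : ℝ, stdGaussianDensity x
      = (Real.sqrt (2 * π))⁻¹ * Real.exp (-x ^ 2 / 2) := by
    intro x
    unfold stdGaussianDensity
    rw [show (-(1 : ℝ) / 2) = -(1 / 2 : ℝ) by norm_num,
      Real.rpow_neg (by positivity), ← Real.sqrt_eq_rpow]
  have hp_pos : ∀ x : ℝ, 0 < mixtureDensity v v' x := by
    intro x; rw [hp_eq]; positivity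
  have hq_pos : ∀ x : ℝ, 0 < stdGaussianDensity x := by
    intro x; rw [hq_eq]; positivity
  -- exponent identities
  have h1 : ∀ x : ℝ, (-k * (x - m) ^ 2 + -k * (x - m) ^ 2) + x ^ 2 / 2
      = (-a * x ^ 2 + b * x) + -v' / v := by
    intro x
    rw [hkdef, hadef, hbdef]
    field_simp
    linear_combination (-2) * hsm
  have h2 : ∀ x : ℝ, (-k * (x + m) ^ 2 + -k * (x + m) ^ 2) + x ^ 2 / 2
      = (-a * x ^ 2 + -b * x) + -v' / v := by
    intro x
    rw [hkdef, hadef, hbdef]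
    field_simp
    linear_combination (-2) * hsm
  have h3 : ∀ x : ℝ, (-k * (x - m) ^ 2 + -k * (x + m) ^ 2) + x ^ 2 / 2
      = (-a * x ^ 2 + 0 * x) + -v' / v := by
    intro x
    rw [hkdef, hadef]
    field_simp
    linear_combination (-2) * hsm
  -- scalar identities
  have hβ : b ^ 2 / (4 * a) + -v' / v = v' / (v + 2 * v') := by
    rw [hbdef, hadef, hsdef]
    field_simp
    linear_combination (8 * (v + v')) * hsm
  have hc2 : c ^ 2 = s / (2 * π * v) / 4 := by
    rw [hcdef, mul_pow, Real.sq_sqrt (by positivity)]; ring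
  have h2π : Real.sqrt (2 * π) * Real.sqrt (π / a) = 2 * π * Real.sqrt (v / (v + 2 * v')) := by
    rw [← Real.sqrt_mul (by positivity)]
    have h : 2 * π * (π / a) = (2 * π) ^ 2 * (v / (v + 2 * v')) := by
      rw [hadef]; field_simp
    rw [h, Real.sqrt_mul (by positivity), Real.sqrt_sq (by positivity)]
  have hvne : Real.sqrt v ≠ 0 := (Real.sqrt_pos.mpr hv).ne'
  have hwne : Real.sqrt (v + 2 * v') ≠ 0 := (Real.sqrt_pos.mpr (by positivity)).ne'
  have hvv : Real.sqrt v * Real.sqrt v = v := Real.mul_self_sqrt hv.le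
  have hcoeff : 2 * c ^ 2 * (Real.sqrt (2 * π) * Real.sqrt (π / a))
      = s / (2 * Real.sqrt (v * (v + 2 * v'))) := by
    rw [hc2, h2π, Real.sqrt_div hv.le, Real.sqrt_mul hv.le]
    field_simp
    linear_combination 4 * hvv
  -- the key pointwise identity for p² / q
  set C : ℝ := c ^ 2 * Real.sqrt (2 * π) * Real.exp (-v' / v) with hCdef
  have hqinv : ∀ x : ℝ, (stdGaussianDensity x)⁻¹
      = Real.sqrt (2 * π) * Real.exp (x ^ 2 / 2) := by
    intro x
    rw [hq_eq x, mul_inv, inv_inv, ← Real.exp_neg]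
    ring_nf
  have key : ∀ x : ℝ, mixtureDensity v v' x ^ 2 / stdGaussianDensity x
      = C * (Real.exp (-a * x ^ 2 + b * x)
          + (Real.exp (-a * x ^ 2 + -b * x) + 2 * Real.exp (-a * x ^ 2 + 0 * x))) := by
    intro x
    have e1 : Real.exp (-k * (x - m) ^ 2) * Real.exp (-k * (x - m) ^ 2)
        * Real.exp (x ^ 2 / 2)
        = Real.exp (-a * x ^ 2 + b * x) * Real.exp (-v' / v) := by
      rw [← Real.exp_add, ← Real.exp_add, h1 x, Real.exp_add]
    have e2 : Real.exp (-k * (x + m) ^ 2) * Real.exp (-k * (x + m) ^ 2)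
        * Real.exp (x ^ 2 / 2)
        = Real.exp (-a * x ^ 2 + -b * x) * Real.exp (-v' / v) := by
      rw [← Real.exp_add, ← Real.exp_add, h2 x, Real.exp_add]
    have e3 : Real.exp (-k * (x - m) ^ 2) * Real.exp (-k * (x + m) ^ 2)
        * Real.exp (x ^ 2 / 2)
        = Real.exp (-a * x ^ 2 + 0 * x) * Real.exp (-v' / v) := by
      rw [← Real.exp_add, ← Real.exp_add, h3 x, Real.exp_add]
    rw [div_eq_mul_inv, hqinv x, hp_eq x]
    calc (c * (Real.exp (-k * (x - m) ^ 2) + Real.exp (-k * (x + m) ^ 2))) ^ 2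
          * (Real.sqrt (2 * π) * Real.exp (x ^ 2 / 2))
        = c ^ 2 * Real.sqrt (2 * π)
            * (Real.exp (-k * (x - m) ^ 2) * Real.exp (-k * (x - m) ^ 2)
                * Real.exp (x ^ 2 / 2)
              + (Real.exp (-k * (x + m) ^ 2) * Real.exp (-k * (x + m) ^ 2)
                  * Real.exp (x ^ 2 / 2)
                + 2 * (Real.exp (-k * (x - m) ^ 2) * Real.exp (-k * (x + m) ^ 2)
                    * Real.exp (x ^ 2 / 2)))) := by ring
      _ = C * (Real.exp (-a * x ^ 2 + b * x)
            + (Real.exp (-a * x ^ 2 + -b * x) + 2 * Real.exp (-a * x ^ 2 + 0 * x))) := by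
          rw [e1, e2, e3, hCdef]; ring
  -- integrability facts
  have hg1 : Integrable (fun x : ℝ => Real.exp (-a * x ^ 2 + b * x)) :=
    integrable_gauss_lin a b ha
  have hg2 : Integrable (fun x : ℝ => Real.exp (-a * x ^ 2 + -b * x)) :=
    integrable_gauss_lin a (-b) ha
  have hg3 : Integrable (fun x : ℝ => Real.exp (-a * x ^ 2 + 0 * x)) :=
    integrable_gauss_lin a 0 ha
  have hratio_int : Integrable
      (fun x : ℝ => mixtureDensity v v' x ^ 2 / stdGaussianDensity x) := by
    have : Integrable (fun x : ℝ => C * (Real.exp (-a * x ^ 2 + b * x)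
        + (Real.exp (-a * x ^ 2 + -b * x) + 2 * Real.exp (-a * x ^ 2 + 0 * x)))) :=
      ((hg1.add (hg2.add (hg3.const_mul 2))).const_mul C)
    exact this.congr (Filter.Eventually.of_forall fun x => (key x).symm)
  have hA_int : Integrable (fun x : ℝ => Real.exp (-k * (x - m) ^ 2)) := by
    simpa using (integrable_exp_neg_mul_sq hk).comp_sub_right m
  have hB_int : Integrable (fun x : ℝ => Real.exp (-k * (x + m) ^ 2)) := by
    simpa [sub_neg_eq_add] using (integrable_exp_neg_mul_sq hk).comp_sub_right (-m)
  have hp_fun : mixtureDensity v v'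
      = fun x => c * (Real.exp (-k * (x - m) ^ 2) + Real.exp (-k * (x + m) ^ 2)) :=
    funext hp_eq
  have hp_int : Integrable (mixtureDensity v v') := by
    rw [hp_fun]; exact (hA_int.add hB_int).const_mul c
  -- the mixture integrates to 1
  have h0 : ∫ x : ℝ, Real.exp (-(k * x ^ 2)) = Real.sqrt (π / k) := by
    simpa using integral_gaussian k
  have iA : ∫ x : ℝ, Real.exp (-k * (x - m) ^ 2) = Real.sqrt (π / k) := by
    have := integral_sub_right_eq_self (μ := volume)
      (fun x : ℝ => Real.exp (-(k * x ^ 2))) m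
    simpa [h0] using this
  have iB : ∫ x : ℝ, Real.exp (-k * (x + m) ^ 2) = Real.sqrt (π / k) := by
    have := integral_sub_right_eq_self (μ := volume)
      (fun x : ℝ => Real.exp (-(k * x ^ 2))) (-m)
    simpa [sub_neg_eq_add, h0] using this
  have hp_one : ∫ x : ℝ, mixtureDensity v v' x = 1 := by
    rw [hp_fun]
    rw [MeasureTheory.integral_const_mul, integral_add hA_int hB_int, iA, iB]
    have hπk : π / k = 2 * π * v / s := by rw [hkdef]; field_simp
    have hone : Real.sqrt (s / (2 * π * v)) * Real.sqrt (2 * π * v / s) = 1 := by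
      rw [← Real.sqrt_mul (by positivity),
        show s / (2 * π * v) * (2 * π * v / s) = 1 by field_simp]
      exact Real.sqrt_one
    rw [hπk, hcdef]
    linear_combination hone
  -- the chi-square integral
  have hI : ∫ x : ℝ, mixtureDensity v v' x ^ 2 / stdGaussianDensity x
      = (v + v') * (Real.exp (v' / (v + 2 * v')) + Real.exp (-v' / v))
          / (2 * Real.sqrt (v * (v + 2 * v'))) := by
    have hsum2 : Integrable (fun x : ℝ => Real.exp (-a * x ^ 2 + -b * x)
        + 2 * Real.exp (-a * x ^ 2 + 0 * x)) := hg2.add (hg3.const_mul 2)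
    have h2mul : Integrable (fun x : ℝ => 2 * Real.exp (-a * x ^ 2 + 0 * x)) :=
      hg3.const_mul 2
    simp_rw [key]
    rw [MeasureTheory.integral_const_mul, integral_add hg1 hsum2,
      integral_add hg2 h2mul, MeasureTheory.integral_const_mul,
      integral_gauss_lin a b ha, integral_gauss_lin a (-b) ha, integral_gauss_lin a 0 ha]
    rw [show ((-b) ^ 2 : ℝ) = b ^ 2 by ring, show ((0 : ℝ) ^ 2 / (4 * a)) = 0 by norm_num,
      Real.exp_zero, hCdef]
    rw [← hβ, Real.exp_add]
    linear_combination (Real.exp (b ^ 2 / (4 * a)) * Real.exp (-v' / v)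
        + Real.exp (-v' / v)) * hcoeff
      + (Real.exp (b ^ 2 / (4 * a)) * Real.exp (-v' / v) + Real.exp (-v' / v))
          / (2 * Real.sqrt (v * (v + 2 * v'))) * hsdef
  -- pointwise inequality
  have hpt : ∀ x : ℝ, mixtureDensity v v' x
      * Real.log (mixtureDensity v v' x / stdGaussianDensity x)
      ≤ mixtureDensity v v' x ^ 2 / stdGaussianDensity x - mixtureDensity v v' x := by
    intro x
    have hlog := Real.log_le_sub_one_of_pos (div_pos (hp_pos x) (hq_pos x))
    have h := mul_le_mul_of_nonneg_left hlog (hp_pos x).le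
    have hsq : mixtureDensity v v' x * (mixtureDensity v v' x / stdGaussianDensity x)
        = mixtureDensity v v' x ^ 2 / stdGaussianDensity x := by
      rw [mul_div_assoc']; ring_nf
    have hid : mixtureDensity v v' x * (mixtureDensity v v' x / stdGaussianDensity x - 1)
        = mixtureDensity v v' x ^ 2 / stdGaussianDensity x - mixtureDensity v v' x := by
      rw [mul_sub, mul_one, hsq]
    linarith [h, hid.ge, hid.le]
  -- continuity
  have hcont_p : Continuous (mixtureDensity v v') := by
    rw [hp_fun]; fun_prop
  have hcont_q : Continuous stdGaussianDensity := by
    unfold stdGaussianDensity; fun_prop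
  have hf_cont : Continuous (fun x : ℝ => mixtureDensity v v' x
      * Real.log (mixtureDensity v v' x / stdGaussianDensity x)) :=
    hcont_p.mul ((hcont_p.div hcont_q fun x => (hq_pos x).ne').log
      fun x => (div_pos (hp_pos x) (hq_pos x)).ne')
  -- integrable bound for the entropy integrand
  set K₀ : ℝ := |Real.log c| + Real.log 2 + |Real.log (Real.sqrt (2 * π))| with hK₀def
  have hbound_int : Integrable (fun x : ℝ => mixtureDensity v v' x
      * (K₀ + k * (x - m) ^ 2 + x ^ 2 / 2)) := by
    have hAx2 : Integrable (fun x : ℝ => (x - m) ^ 2 * Real.exp (-k * (x - m) ^ 2)) :=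
      integrable_sq_mul_gauss k m m hk
    have hA0 : Integrable (fun x : ℝ => x ^ 2 * Real.exp (-k * (x - m) ^ 2)) := by
      simpa using integrable_sq_mul_gauss k m 0 hk
    have hBx2 : Integrable (fun x : ℝ => (x - m) ^ 2 * Real.exp (-k * (x + m) ^ 2)) := by
      simpa [sub_neg_eq_add] using integrable_sq_mul_gauss k (-m) m hk
    have hB0 : Integrable (fun x : ℝ => x ^ 2 * Real.exp (-k * (x + m) ^ 2)) := by
      simpa [sub_neg_eq_add] using integrable_sq_mul_gauss k (-m) 0 hk
    have heq : (fun x : ℝ => mixtureDensity v v' x * (K₀ + k * (x - m) ^ 2 + x ^ 2 / 2))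
        = fun x : ℝ => (c * K₀) * Real.exp (-k * (x - m) ^ 2)
            + ((c * k) * ((x - m) ^ 2 * Real.exp (-k * (x - m) ^ 2))
            + ((c / 2) * (x ^ 2 * Real.exp (-k * (x - m) ^ 2))
            + ((c * K₀) * Real.exp (-k * (x + m) ^ 2)
            + ((c * k) * ((x - m) ^ 2 * Real.exp (-k * (x + m) ^ 2))
            + (c / 2) * (x ^ 2 * Real.exp (-k * (x + m) ^ 2)))))) := by
      funext x; rw [hp_eq x]; ring
    rw [heq]
    exact (hA_int.const_mul _).add ((hAx2.const_mul _).add ((hA0.const_mul _).add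
      ((hB_int.const_mul _).add ((hBx2.const_mul _).add (hB0.const_mul _)))))
  have hmajor : ∀ x : ℝ, ‖mixtureDensity v v' x
      * Real.log (mixtureDensity v v' x / stdGaussianDensity x)‖
      ≤ mixtureDensity v v' x * (K₀ + k * (x - m) ^ 2 + x ^ 2 / 2) := by
    intro x
    rw [Real.norm_eq_abs, abs_mul, abs_of_pos (hp_pos x)]
    refine mul_le_mul_of_nonneg_left ?_ (hp_pos x).le
    rw [Real.log_div (hp_pos x).ne' (hq_pos x).ne']
    have hlogp : |Real.log (mixtureDensity v v' x)|
        ≤ |Real.log c| + (Real.log 2 + k * (x - m) ^ 2) := by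
      rw [hp_eq x, Real.log_mul hc.ne' (by positivity)]
      refine (abs_add_le _ _).trans ?_
      gcongr
      have hup : Real.log (Real.exp (-k * (x - m) ^ 2) + Real.exp (-k * (x + m) ^ 2))
          ≤ Real.log 2 := by
        apply Real.log_le_log (by positivity)
        have e1 : Real.exp (-k * (x - m) ^ 2) ≤ 1 :=
          Real.exp_le_one_iff.mpr (by nlinarith [sq_nonneg (x - m)])
        have e2 : Real.exp (-k * (x + m) ^ 2) ≤ 1 :=
          Real.exp_le_one_iff.mpr (by nlinarith [sq_nonneg (x + m)])
        linarith
      have hlo : -k * (x - m) ^ 2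
          ≤ Real.log (Real.exp (-k * (x - m) ^ 2) + Real.exp (-k * (x + m) ^ 2)) := by
        have := Real.log_le_log (Real.exp_pos (-k * (x - m) ^ 2))
          (show Real.exp (-k * (x - m) ^ 2)
              ≤ Real.exp (-k * (x - m) ^ 2) + Real.exp (-k * (x + m) ^ 2) by
            nlinarith [Real.exp_pos (-k * (x + m) ^ 2)])
        rwa [Real.log_exp] at this
      have h2 : (0 : ℝ) ≤ Real.log 2 := Real.log_nonneg one_le_two
      have hk2 : (0 : ℝ) ≤ k * (x - m) ^ 2 := by positivity
      rw [abs_le]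
      constructor <;> linarith
    have hlogq : |Real.log (stdGaussianDensity x)|
        ≤ |Real.log (Real.sqrt (2 * π))| + x ^ 2 / 2 := by
      rw [hq_eq x, Real.log_mul (by positivity) (Real.exp_pos _).ne', Real.log_exp,
        Real.log_inv]
      refine (abs_add_le _ _).trans ?_
      rw [abs_neg]
      gcongr
      rw [abs_le]
      constructor <;> [linarith [sq_nonneg x]; linarith [sq_nonneg x]]
    calc |Real.log (mixtureDensity v v' x) - Real.log (stdGaussianDensity x)|
        ≤ |Real.log (mixtureDensity v v' x)| + |Real.log (stdGaussianDensity x)| :=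
          abs_sub _ _
      _ ≤ K₀ + k * (x - m) ^ 2 + x ^ 2 / 2 := by rw [hK₀def]; linarith
  have hf_int : Integrable (fun x : ℝ => mixtureDensity v v' x
      * Real.log (mixtureDensity v v' x / stdGaussianDensity x)) :=
    Integrable.mono' hbound_int hf_cont.aestronglyMeasurable
      (Filter.Eventually.of_forall hmajor)
  -- conclusion
  calc ∫ x : ℝ, mixtureDensity v v' x
        * Real.log (mixtureDensity v v' x / stdGaussianDensity x)
      ≤ ∫ x : ℝ, (mixtureDensity v v' x ^ 2 / stdGaussianDensity x
          - mixtureDensity v v' x) :=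
        integral_mono hf_int (hratio_int.sub hp_int) hpt
    _ = (∫ x : ℝ, mixtureDensity v v' x ^ 2 / stdGaussianDensity x)
          - ∫ x : ℝ, mixtureDensity v v' x := integral_sub hratio_int hp_int
    _ = (v + v') * (Real.exp (v' / (v + 2 * v')) + Real.exp (-v' / v))
          / (2 * Real.sqrt (v * (v + 2 * v'))) - 1 := by rw [hI, hp_one]
end

section
/- The ratio f(x) = p_{v,v'}(x)/φ_1(x) of the density of the symmetric two-Gaussian mixture P_{v,v'} to the standard Gaussian density satisfies, for all x ≥ 0, f(x) ≤ √((v'+v)/v)·e^{1/2}. -/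
open Real

/-- For all `x ≥ 0`, the ratio `f(x) = p_{v,v'}(x)/φ₁(x)` of the mixture
density to the standard Gaussian density satisfies
`f(x) ≤ √((v'+v)/v)·e^{1/2}`. -/
theorem density_ratio_upper_bound (v v' : ℝ) (hv : 0 < v) (hv' : 0 < v')
    (x : ℝ) (hx : 0 ≤ x) :
    mixtureDensity v v' x / stdGaussianDensity x
      ≤ Real.sqrt ((v' + v) / v) * Real.exp (1 / 2) := by
  have hs : (0:ℝ) < v' + v := by linarith
  have hπ : 0 < π := Real.pi_pos
  have hstd : 0 < stdGaussianDensity x := by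
    unfold stdGaussianDensity; positivity
  rw [div_le_iff₀ hstd]
  unfold mixtureDensity stdGaussianDensity
  set a := Real.sqrt (v' + v) with ha_def
  set b := Real.sqrt v' with hb_def
  have ha : 0 < a := Real.sqrt_pos.mpr hs
  have ha2 : a ^ 2 = v' + v := Real.sq_sqrt hs.le
  have hb2 : b ^ 2 = v' := Real.sq_sqrt hv'.le
  have hb : 0 ≤ b := Real.sqrt_nonneg _
  have hm : Real.sqrt (v' / (v' + v)) = b / a := Real.sqrt_div hv'.le _
  have h2π : (2 * π) ^ (-(1:ℝ) / 2) = (Real.sqrt (2 * π))⁻¹ := by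
    rw [Real.sqrt_eq_rpow, ← Real.rpow_neg (by positivity)]
    norm_num
  have hsplit : (v' + v) / (2 * π * v) = ((v' + v) / v) / (2 * π) := by
    rw [div_div]; ring_nf
  rw [hsplit, Real.sqrt_div (by positivity) _, hm, h2π]
  set C := Real.sqrt ((v' + v) / v) with hC_def
  set D := Real.sqrt (2 * π) with hD_def
  have hC : 0 ≤ C := Real.sqrt_nonneg _
  have hD : 0 < D := Real.sqrt_pos.mpr (by positivity)
  have hEq1 : (v' + v) * (x - b / a) ^ 2 = (a * x - b) ^ 2 := by
    rw [← ha2]; field_simp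
  have hEq2 : (v' + v) * (x + b / a) ^ 2 = (a * x + b) ^ 2 := by
    rw [← ha2]; field_simp
  rw [hEq1, hEq2]
  have hA : Real.exp (-(a * x - b) ^ 2 / (2 * v)) ≤ Real.exp (1 / 2 - x ^ 2 / 2) := by
    apply Real.exp_le_exp.mpr
    rw [div_le_iff₀ (by positivity : (0:ℝ) < 2 * v)]
    nlinarith [sq_nonneg (a - b * x), sq_nonneg (a * x - b)]
  have hB : Real.exp (-(a * x + b) ^ 2 / (2 * v)) ≤ Real.exp (1 / 2 - x ^ 2 / 2) := by
    apply Real.exp_le_exp.mpr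
    rw [div_le_iff₀ (by positivity : (0:ℝ) < 2 * v)]
    nlinarith [mul_nonneg (mul_nonneg ha.le hx) hb, sq_nonneg (a * x + b)]
  calc (1 / 2) * (C / D) * (Real.exp (-(a * x - b) ^ 2 / (2 * v))
        + Real.exp (-(a * x + b) ^ 2 / (2 * v)))
      ≤ (1 / 2) * (C / D) * (Real.exp (1 / 2 - x ^ 2 / 2) + Real.exp (1 / 2 - x ^ 2 / 2)) := by
        have : 0 ≤ (1 / 2) * (C / D) := by positivity
        exact mul_le_mul_of_nonneg_left (add_le_add hA hB) this
    _ = C * Real.exp (1 / 2) * (D⁻¹ * Real.exp (-x ^ 2 / 2)) := by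
        rw [show (1 / 2 - x ^ 2 / 2 : ℝ) = 1 / 2 + -x ^ 2 / 2 by ring, Real.exp_add]
        field_simp; ring
end
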